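/- Let d ≥ 1, 1 ≤ N ≤ d, A : (N-subsets of Fin d) → ℂ with ∑_S |A(S)|² = 1, and c : Fin d → ℂ with ∑_k |c(k)|² = 1. With A(T ∪ {k}) := 0 when k ∈ T, one has ∑_{T : (N−1)-subsets} |∑_k conj(A(T ∪ {k})) c(k)|² ≤ (d − N + 1) · ∑_{S : N-subsets} |A(S)|² · ∑_{k ∈ S} |c(k)|², which equals (d−N+1) − (d−N+1) · ∑_S |A(S)|² ∑_{k∉S} |c(k)|². -/

import Mathlib

/-!
For a fixed `(N-1)`-set `T`, the inner sum runs over the `d - N + 1` indices `k ∉ T`, so the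
triangle inequality and Cauchy–Schwarz against the indicator of `univ \ T` bound its square by
`(d - N + 1) ∑_{k ∉ T} |A(T ∪ {k})|² |c(k)|²`. Summing over `T`, the pairs `(T, k)` with `k ∉ T`
correspond bijectively to the pairs `(S, k)` with `k ∈ S`, `#S = N`, via `S = insert k T`.
The closing identity is `∑_{k ∈ S} |c k|² = 1 - ∑_{k ∉ S} |c k|²` summed against `|A S|²`.
-/

open Finset

theorem Finset.sum_powersetCard_sum_sdiff_insert {ι M : Type*} [DecidableEq ι]
    [AddCommMonoid M] (s : Finset ι) (n : ℕ) (f : Finset ι → ι → M) :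
    ∑ T ∈ powersetCard n s, ∑ k ∈ s \ T, f (insert k T) k
      = ∑ S ∈ powersetCard (n + 1) s, ∑ k ∈ S, f S k := by
  rw [sum_sigma', sum_sigma']
  refine sum_nbij' (fun p => ⟨insert p.2 p.1, p.2⟩) (fun p => ⟨p.1.erase p.2, p.2⟩)
    ?_ ?_ ?_ ?_ fun _ _ => rfl
  · rintro ⟨T, k⟩ hp
    simp only [mem_sigma, mem_powersetCard, mem_sdiff] at hp ⊢
    exact ⟨⟨insert_subset hp.2.1 hp.1.1, by rw [card_insert_of_notMem hp.2.2, hp.1.2]⟩,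
      mem_insert_self k T⟩
  · rintro ⟨S, k⟩ hp
    simp only [mem_sigma, mem_powersetCard, mem_sdiff] at hp ⊢
    exact ⟨⟨(erase_subset k S).trans hp.1.1, by rw [card_erase_of_mem hp.2, hp.1.2]; rfl⟩,
      hp.1.1 hp.2, notMem_erase k S⟩
  · rintro ⟨T, k⟩ hp
    simp only [mem_sigma, mem_sdiff] at hp
    simp [erase_insert hp.2.2]
  · rintro ⟨S, k⟩ hp
    simp only [mem_sigma] at hp
    simp [insert_erase hp.2]

section CauchySchwarz

variable {ι 𝕜 : Type*} [RCLike 𝕜]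

theorem norm_sum_conj_mul_sq_le (s : Finset ι) (a c : ι → 𝕜) :
    ‖∑ k ∈ s, starRingEnd 𝕜 (a k) * c k‖ ^ 2
      ≤ #s * ∑ k ∈ s, ‖a k‖ ^ 2 * ‖c k‖ ^ 2 := calc
  _ ≤ (∑ k ∈ s, ‖a k‖ * ‖c k‖) ^ 2 := by
    gcongr
    refine (norm_sum_le _ _).trans_eq (sum_congr rfl fun k _ => ?_)
    rw [norm_mul, RCLike.norm_conj]
  _ ≤ #s * ∑ k ∈ s, (‖a k‖ * ‖c k‖) ^ 2 := sq_sum_le_card_mul_sum_sq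
  _ = #s * ∑ k ∈ s, ‖a k‖ ^ 2 * ‖c k‖ ^ 2 := by simp_rw [mul_pow]

theorem norm_sum_conj_ite_mul_sq_le [Fintype ι] [DecidableEq ι] (T : Finset ι)
    (a c : ι → 𝕜) :
    ‖∑ k, starRingEnd 𝕜 (if k ∈ T then 0 else a k) * c k‖ ^ 2
      ≤ ((Fintype.card ι : ℝ) - #T) * ∑ k ∈ univ \ T, ‖a k‖ ^ 2 * ‖c k‖ ^ 2 := by
  have hsum : ∑ k, starRingEnd 𝕜 (if k ∈ T then 0 else a k) * c k
      = ∑ k ∈ univ \ T, starRingEnd 𝕜 (a k) * c k := by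
    rw [← sum_compl_add_sum T, sum_eq_zero (s := T) fun k hk => by simp [hk], add_zero,
      compl_eq_univ_sdiff]
    exact sum_congr rfl fun k hk => by simp [(mem_sdiff.mp hk).2]
  have hcard : ((#(univ \ T) : ℕ) : ℝ) = Fintype.card ι - #T := by
    rw [card_univ_sdiff, Nat.cast_sub (card_le_univ T)]
  rw [hsum, ← hcard]
  exact norm_sum_conj_mul_sq_le _ _ _

end CauchySchwarz

theorem sum_mul_sum_eq_sum_sub_sum_mul_sum_sdiff {ι R : Type*} [Fintype ι] [DecidableEq ι]
    [CommRing R] (F : Finset (Finset ι)) (a : Finset ι → R) {w : ι → R}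
    (hw : ∑ k, w k = 1) :
    ∑ S ∈ F, a S * ∑ k ∈ S, w k = ∑ S ∈ F, a S - ∑ S ∈ F, a S * ∑ k ∈ univ \ S, w k := by
  rw [← sum_sub_distrib]
  refine sum_congr rfl fun S _ => ?_
  linear_combination a S * ((sum_sdiff (subset_univ S) (f := w)).trans hw)

theorem stmt2_general (d N : ℕ) (hN1 : 1 ≤ N)
    (A : Finset (Fin d) → ℂ)
    (hA : ∑ S ∈ Finset.powersetCard N (Finset.univ : Finset (Fin d)),
        ‖A S‖ ^ 2 = 1)
    (c : Fin d → ℂ) (hc : ∑ k, ‖c k‖ ^ 2 = 1) :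
    (∑ T ∈ Finset.powersetCard (N - 1) (Finset.univ : Finset (Fin d)),
      ‖∑ k, (starRingEnd ℂ) (if k ∈ T then 0 else A (insert k T)) * c k‖ ^ 2
      ≤ ((d : ℝ) - N + 1) *
        ∑ S ∈ Finset.powersetCard N (Finset.univ : Finset (Fin d)),
          ‖A S‖ ^ 2 * ∑ k ∈ S, ‖c k‖ ^ 2) ∧
    (((d : ℝ) - N + 1) *
        ∑ S ∈ Finset.powersetCard N (Finset.univ : Finset (Fin d)),
          ‖A S‖ ^ 2 * ∑ k ∈ S, ‖c k‖ ^ 2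
      = ((d : ℝ) - N + 1) - ((d : ℝ) - N + 1) *
        ∑ S ∈ Finset.powersetCard N (Finset.univ : Finset (Fin d)),
          ‖A S‖ ^ 2 * ∑ k ∈ (Finset.univ : Finset (Fin d)) \ S,
            ‖c k‖ ^ 2) := by
  refine ⟨?_, ?_⟩
  · calc _ ≤ ∑ T ∈ powersetCard (N - 1) univ, ((d : ℝ) - N + 1) *
          ∑ k ∈ univ \ T, ‖A (insert k T)‖ ^ 2 * ‖c k‖ ^ 2 := by
          refine sum_le_sum fun T hT => ?_
          have hcard : ((Fintype.card (Fin d) : ℝ) - #T) = d - N + 1 := by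
            rw [(mem_powersetCard.mp hT).2, Fintype.card_fin, Nat.cast_sub hN1]
            ring
          simpa only [hcard] using norm_sum_conj_ite_mul_sq_le T (fun k => A (insert k T)) c
      _ = _ := by
        rw [← mul_sum, sum_powersetCard_sum_sdiff_insert univ (N - 1)
          (fun S k => ‖A S‖ ^ 2 * ‖c k‖ ^ 2), Nat.sub_add_cancel hN1]
        simp_rw [mul_sum]
  · rw [sum_mul_sum_eq_sum_sub_sum_mul_sum_sdiff _ _ hc, hA, mul_sub, mul_one]

theorem stmt2 (d N : ℕ) (hd : 1 ≤ d) (hN1 : 1 ≤ N) (hNd : N ≤ d)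
    (A : Finset (Fin d) → ℂ)
    (hA : ∑ S ∈ Finset.powersetCard N (Finset.univ : Finset (Fin d)),
        ‖A S‖ ^ 2 = 1)
    (c : Fin d → ℂ) (hc : ∑ k, ‖c k‖ ^ 2 = 1) :
    (∑ T ∈ Finset.powersetCard (N - 1) (Finset.univ : Finset (Fin d)),
      ‖∑ k, (starRingEnd ℂ) (if k ∈ T then 0 else A (insert k T)) * c k‖ ^ 2
      ≤ ((d : ℝ) - N + 1) *
        ∑ S ∈ Finset.powersetCard N (Finset.univ : Finset (Fin d)),
          ‖A S‖ ^ 2 * ∑ k ∈ S, ‖c k‖ ^ 2) ∧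
    (((d : ℝ) - N + 1) *
        ∑ S ∈ Finset.powersetCard N (Finset.univ : Finset (Fin d)),
          ‖A S‖ ^ 2 * ∑ k ∈ S, ‖c k‖ ^ 2
      = ((d : ℝ) - N + 1) - ((d : ℝ) - N + 1) *
        ∑ S ∈ Finset.powersetCard N (Finset.univ : Finset (Fin d)),
          ‖A S‖ ^ 2 * ∑ k ∈ (Finset.univ : Finset (Fin d)) \ S,
            ‖c k‖ ^ 2) :=
  stmt2_general d N hN1 A hA c hc
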